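/- arXiv:1804.01400 — 7 statements merged into one kernel-verified Lean document; each statement's English description precedes it below -/
import Mathlib

section
/- A function f : Z → ℂ is admissible (i.e., for all finite sequences of complex numbers c_k and points z_k ∈ Z, if ∑ c_k K(z_k, z) = 0 for all z ∈ Z then ∑ c_k f(z_k) = 0) if and only if there exists an antilinear functional ψ on the quantum space Q(Z) such that f(z) = ⟨z|ψ for all z ∈ Z; moreover such ψ is unique. -/
open scoped ComplexConjugate

/-- A function `f : Z → ℂ` is admissible for the coherent product `K` if whenever
`∑ c_k K(z_k, ·) ≡ 0` for a finite family, also `∑ c_k f(z_k) = 0`. -/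
def Admissible {Z : Type*} (K : Z → Z → ℂ) (f : Z → ℂ) : Prop :=
  ∀ (n : ℕ) (c : Fin n → ℂ) (zs : Fin n → Z),
    (∀ z, ∑ i, c i * K (zs i) z = 0) → ∑ i, c i * f (zs i) = 0

/-!
Since `⟨∑ conj cₖ |zₖ⟩, |z⟩⟩ = ∑ cₖ K(zₖ, z)` and the vectors `|z⟩` span `Q`, the premise
`∑ cₖ K(zₖ, ·) ≡ 0` of admissibility says exactly that `∑ conj cₖ |zₖ⟩ = 0`. Hence `f` is
admissible iff `|z⟩ ↦ f z` respects every linear relation among the `|z⟩`, which is precisely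
when it extends to an antilinear functional on `Q`, the quotient of the free module on `Z` by
these relations. The extension is unique because the `|z⟩` span `Q`.
-/

theorem Finsupp.sum_eq_sum_equivFin {α M N : Type*} [Zero M] [AddCommMonoid N] (l : α →₀ M)
    (g : α → M → N) :
    l.sum g = ∑ i, g (l.support.equivFin.symm i) (l (l.support.equivFin.symm i)) := by
  rw [Finsupp.sum, ← Finset.sum_coe_sort, ← l.support.equivFin.symm.sum_comp]

section SemilinearExtension

variable {R S M N P : Type*} [Ring R] [Ring S] {σ : R →+* S}
  [AddCommGroup M] [Module R M] [AddCommGroup N] [Module R N] [AddCommGroup P] [Module S P]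

theorem LinearMap.exists_comp_eq_of_ker_le {T : M →ₗ[R] N} (hT : Function.Surjective T)
    {L : M →ₛₗ[σ] P} (hker : LinearMap.ker T ≤ LinearMap.ker L) :
    ∃ φ : N →ₛₗ[σ] P, φ.comp T = L :=
  ⟨(LinearMap.ker T).liftQ L hker ∘ₛₗ
      ((T.quotKerEquivOfSurjective hT).symm : N →ₗ[R] M ⧸ LinearMap.ker T),
    LinearMap.ext fun x => by simp⟩

theorem exists_semilinearMap_apply_eq_iff {Z : Type*} {k : Z → N}
    (hk : Submodule.span R (Set.range k) = ⊤) (f : Z → P) :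
    (∃ ψ : N →ₛₗ[σ] P, ∀ z, ψ (k z) = f z) ↔
      ∀ (n : ℕ) (c : Fin n → R) (zs : Fin n → Z),
        ∑ i, c i • k (zs i) = 0 → ∑ i, σ (c i) • f (zs i) = 0 := by
  constructor
  · rintro ⟨ψ, hψ⟩ n c zs hrel
    simpa [hψ] using congrArg ψ hrel
  intro hrel
  let T : (Z →₀ R) →ₗ[R] N := Finsupp.linearCombination R k
  have hT : Function.Surjective T := by
    rw [← LinearMap.range_eq_top, Finsupp.range_linearCombination, hk]
  let L : (Z →₀ R) →ₛₗ[σ] P :=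
    Finsupp.lsum ℕ fun z => (LinearMap.toSpanSingleton S P (f z)).comp σ.toSemilinearMap
  have hker : LinearMap.ker T ≤ LinearMap.ker L := by
    intro l hl
    have hTl := LinearMap.mem_ker.1 hl
    rw [Finsupp.linearCombination_apply, Finsupp.sum_eq_sum_equivFin] at hTl
    rw [LinearMap.mem_ker, Finsupp.lsum_apply, Finsupp.sum_eq_sum_equivFin]
    simpa using hrel _ _ _ hTl
  obtain ⟨φ, hφ⟩ := LinearMap.exists_comp_eq_of_ker_le hT hker
  refine ⟨φ, fun z => ?_⟩
  simpa [T, L] using LinearMap.congr_fun hφ (Finsupp.single z 1)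

end SemilinearExtension

theorem eq_zero_of_forall_inner_eq_zero_of_span_eq_top {𝕜 E ι : Type*} [RCLike 𝕜]
    [NormedAddCommGroup E] [InnerProductSpace 𝕜 E] {v : ι → E}
    (hv : Submodule.span 𝕜 (Set.range v) = ⊤) {x : E} (hx : ∀ i, inner 𝕜 x (v i) = 0) :
    x = 0 := by
  have : innerₛₗ 𝕜 x = 0 := LinearMap.ext_on hv (by rintro _ ⟨i, rfl⟩; simpa using hx i)
  simpa using LinearMap.congr_fun this x

section CoherentSpace

variable {Z Q : Type*} [NormedAddCommGroup Q] [InnerProductSpace ℂ Q] {K : Z → Z → ℂ}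
  {k : Z → Q}

theorem sum_mul_kernel_eq_inner (hK : ∀ z z', inner ℂ (k z) (k z') = K z z') {n : ℕ}
    (c : Fin n → ℂ) (zs : Fin n → Z) (z : Z) :
    ∑ i, c i * K (zs i) z = inner ℂ (∑ i, conj (c i) • k (zs i)) (k z) := by
  simp [hK, mul_comm]

theorem admissible_iff_forall_sum_smul_eq_zero (hK : ∀ z z', inner ℂ (k z) (k z') = K z z')
    (hspan : Submodule.span ℂ (Set.range k) = ⊤) (f : Z → ℂ) :
    Admissible K f ↔ ∀ (n : ℕ) (c : Fin n → ℂ) (zs : Fin n → Z),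
      ∑ i, c i • k (zs i) = 0 → ∑ i, conj (c i) • f (zs i) = 0 := by
  have hrel : ∀ {n} (c : Fin n → ℂ) (zs : Fin n → Z),
      (∀ z, ∑ i, c i * K (zs i) z = 0) ↔ ∑ i, conj (c i) • k (zs i) = 0 := by
    intro n c zs
    simp_rw [sum_mul_kernel_eq_inner hK]
    exact ⟨eq_zero_of_forall_inner_eq_zero_of_span_eq_top hspan, fun h z => by simp [h]⟩
  constructor
  · intro hf n c zs h
    simpa using hf n (fun i => conj (c i)) zs ((hrel _ zs).2 (by simpa using h))
  · intro hf n c zs h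
    simpa using hf n (fun i => conj (c i)) zs ((hrel c zs).1 h)

end CoherentSpace

/-- `f` is admissible iff there is a (unique) antilinear functional `ψ` on the quantum
space with `f z = ⟨z|ψ = ψ(|z⟩)` for all `z`. -/
theorem admissible_iff_exists_unique_antilinear_functional
    {Z : Type*} (K : Z → Z → ℂ)
    {Q : Type*} [NormedAddCommGroup Q] [InnerProductSpace ℂ Q]
    (k : Z → Q) (hK : ∀ z z', (inner ℂ (k z) (k z') : ℂ) = K z z')
    (hspan : Submodule.span ℂ (Set.range k) = ⊤) (f : Z → ℂ) :
    Admissible K f ↔ ∃! ψ : Q →ₛₗ[starRingEnd ℂ] ℂ, ∀ z, ψ (k z) = f z := by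
  rw [admissible_iff_forall_sum_smul_eq_zero hK hspan, ← exists_semilinearMap_apply_eq_iff hspan]
  refine ⟨fun ⟨ψ, hψ⟩ => ⟨ψ, hψ, fun ψ' hψ' => ?_⟩, ExistsUnique.exists⟩
  exact LinearMap.ext_on hspan (by rintro _ ⟨z, rfl⟩; rw [hψ, hψ'])
end

section
/- Let Z be a coherent space with coherent product K and PZ := ℂ* × Z its projective extension of degree 1 with coherent product K_pe((λ,z),(λ',z')) = conj(λ)·K(z,z')·λ'. If A : Z → Z, v, w : Z → ℂ, and A* : Z → Z satisfy K(z, Az')·v(z') = conj(w(z))·K(A*z, z') for all z, z' ∈ Z, then the map [α,A](λ,z) := (α·v(z)·λ, Az) on PZ is coherent, with adjoint [α,A]*(λ,z) := (conj(α)·w(z)·λ, A*z). -/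
open scoped ComplexConjugate

/-- If `K(z, Az')·v(z') = conj(w(z))·K(A*z, z')` for all `z, z'`, then the map
`[α,A](λ,z) := (α·v(z)·λ, Az)` on the projective extension `PZ = ℂ* × Z` (with coherent
product `K_pe((λ,z),(λ',z')) = conj(λ)·K(z,z')·λ'`) is coherent, with adjoint
`[α,A]*(λ,z) := (conj(α)·w(z)·λ, A*z)`; i.e. `K_pe(u, [α,A]u') = K_pe([α,A]*u, u')`. -/
theorem projective_extension_coherent_map
    {Z : Type*} (K : Z → Z → ℂ)
    (A Astar : Z → Z) (v w : Z → ℂ)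
    (hv : ∀ z, v z ≠ 0) (hw : ∀ z, w z ≠ 0)
    (α : ℂ) (hα : α ≠ 0)
    (h : ∀ z z', K z (A z') * v z' = conj (w z) * K (Astar z) z') :
    ∀ (lam lam' : ℂ), lam ≠ 0 → lam' ≠ 0 → ∀ z z' : Z,
      conj lam * K z (A z') * (α * v z' * lam') =
        conj (conj α * w z * lam) * K (Astar z) z' * lam' := by
  intro lam lam' _ _ z z'
  have := h z z'
  simp only [map_mul, Complex.conj_conj]
  calc conj lam * K z (A z') * (α * v z' * lam')
      = conj lam * (K z (A z') * v z') * α * lam' := by ring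
    _ = conj lam * (conj (w z) * K (Astar z) z') * α * lam' := by rw [this]
    _ = α * conj (w z) * conj lam * K (Astar z) z' * lam' := by ring
end

section
/- For the Möbius space Z = {z ∈ ℂ² : |z₁| > |z₂|} with coherent product K(z,z') = (conj(z₁)z₁' − conj(z₂)z₂')^{-1}, every matrix A ∈ ℂ^{2×2} satisfying α := |A₁₁|² − |A₂₁|² > 0, |β| ≤ α, and γ ≤ α − 2|β| (where β := conj(A₁₁)A₁₂ − conj(A₂₁)A₂₂ and γ := |A₂₂|² − |A₁₂|²) maps Z into itself and is a coherent map, with adjoint A^σ given by (A^σ)₁₁ = conj(A₁₁), (A^σ)₁₂ = −conj(A₂₁), (A^σ)₂₁ = −conj(A₁₂), (A^σ)₂₂ = conj(A₂₂). -/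
open scoped ComplexConjugate

/-- The coherent product of the Möbius space `Z = {z ∈ ℂ² : |z₁| > |z₂|}`. -/
noncomputable def mobiusK (z z' : ℂ × ℂ) : ℂ :=
  (conj z.1 * z'.1 - conj z.2 * z'.2)⁻¹

/-- Action of a `2×2` complex matrix on points of `ℂ²`. -/
def mobiusAct (A : Matrix (Fin 2) (Fin 2) ℂ) (z : ℂ × ℂ) : ℂ × ℂ :=
  (A 0 0 * z.1 + A 0 1 * z.2, A 1 0 * z.1 + A 1 1 * z.2)

/-- The adjoint matrix `A^σ` for the Möbius space. -/
noncomputable def mobiusAdj (A : Matrix (Fin 2) (Fin 2) ℂ) : Matrix (Fin 2) (Fin 2) ℂ :=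
  Matrix.of ![![conj (A 0 0), -conj (A 1 0)], ![-conj (A 0 1), conj (A 1 1)]]

/-! The coherence identity says that `A^σ` is the adjoint of `A` for the indefinite Hermitian
form `conj z₁ z₁' − conj z₂ z₂'`, a polynomial identity. For the invariance
of `Z`, expanding gives `|(Az)₁|² − |(Az)₂|² = α|z₁|² − γ|z₂|² + 2 Re(β conj z₁ z₂)`; with
`r = |z₁| > s = |z₂|` the hypotheses bound this below by
`α r² − (α − 2|β|) s² − 2|β| r s = (r − s)(α(r + s) − 2|β| s) ≥ α (r − s)² > 0`. -/

lemma mobiusK_mobiusAct (A : Matrix (Fin 2) (Fin 2) ℂ) (z z' : ℂ × ℂ) :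
    mobiusK (mobiusAct A z) z' = mobiusK z (mobiusAct (mobiusAdj A) z') := by
  simp only [mobiusK, mobiusAct, mobiusAdj, Matrix.of_apply, Matrix.cons_val_zero,
    Matrix.cons_val_one, map_add, map_mul]
  ring

lemma norm_mul_add_mul_sq (a b x y : ℂ) :
    ‖a * x + b * y‖ ^ 2 =
      ‖a‖ ^ 2 * ‖x‖ ^ 2 + ‖b‖ ^ 2 * ‖y‖ ^ 2 + 2 * (conj a * b * (conj x * y)).re := by
  have h : (a * x * conj (b * y)).re = (conj a * b * (conj x * y)).re := by
    rw [← Complex.conj_re]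
    simp only [map_mul, Complex.conj_conj]
    ring_nf
  simp only [← Complex.normSq_eq_norm_sq, Complex.normSq_add, Complex.normSq_mul, h]

lemma norm_sq_sub_norm_sq_mobiusAct (A : Matrix (Fin 2) (Fin 2) ℂ) (z : ℂ × ℂ) :
    ‖(mobiusAct A z).1‖ ^ 2 - ‖(mobiusAct A z).2‖ ^ 2 =
      (‖A 0 0‖ ^ 2 - ‖A 1 0‖ ^ 2) * ‖z.1‖ ^ 2 - (‖A 1 1‖ ^ 2 - ‖A 0 1‖ ^ 2) * ‖z.2‖ ^ 2 +
        2 * ((conj (A 0 0) * A 0 1 - conj (A 1 0) * A 1 1) * (conj z.1 * z.2)).re := by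
  simp only [mobiusAct, norm_mul_add_mul_sq, sub_mul, Complex.sub_re]
  ring

lemma quadratic_pos_of_lt {α b γ r s : ℝ} (hα : 0 < α) (hb : b ≤ α) (hγ : γ ≤ α - 2 * b)
    (hs : 0 ≤ s) (hsr : s < r) : 0 < α * r ^ 2 - γ * s ^ 2 - 2 * b * r * s :=
  calc 0 < α * (r - s) ^ 2 := by have := sub_pos.2 hsr; positivity
    _ ≤ (r - s) * (α * (r + s) - 2 * b * s) := by nlinarith [mul_nonneg (sub_pos.2 hsr).le hs]
    _ = α * r ^ 2 - (α - 2 * b) * s ^ 2 - 2 * b * r * s := by ring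
    _ ≤ α * r ^ 2 - γ * s ^ 2 - 2 * b * r * s := by nlinarith [sq_nonneg s]

lemma norm_snd_lt_norm_fst_mobiusAct (A : Matrix (Fin 2) (Fin 2) ℂ)
    (hα : 0 < ‖A 0 0‖ ^ 2 - ‖A 1 0‖ ^ 2)
    (hβ : ‖conj (A 0 0) * A 0 1 - conj (A 1 0) * A 1 1‖ ≤ ‖A 0 0‖ ^ 2 - ‖A 1 0‖ ^ 2)
    (hγ : ‖A 1 1‖ ^ 2 - ‖A 0 1‖ ^ 2 ≤
      (‖A 0 0‖ ^ 2 - ‖A 1 0‖ ^ 2) - 2 * ‖conj (A 0 0) * A 0 1 - conj (A 1 0) * A 1 1‖)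
    {z : ℂ × ℂ} (hz : ‖z.2‖ < ‖z.1‖) :
    ‖(mobiusAct A z).2‖ < ‖(mobiusAct A z).1‖ := by
  set β := conj (A 0 0) * A 0 1 - conj (A 1 0) * A 1 1
  have hcross : -(‖β‖ * ‖z.1‖ * ‖z.2‖) ≤ (β * (conj z.1 * z.2)).re := by
    simpa [mul_assoc] using neg_le_of_abs_le (Complex.abs_re_le_norm (β * (conj z.1 * z.2)))
  have hpos := quadratic_pos_of_lt hα hβ hγ (norm_nonneg z.2) hz
  refine lt_of_pow_lt_pow_left₀ 2 (norm_nonneg _) ?_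
  linarith [norm_sq_sub_norm_sq_mobiusAct A z]

/-- Every matrix `A` with `α := |A₁₁|² − |A₂₁|² > 0`, `|β| ≤ α`, `γ ≤ α − 2|β|`
(where `β := conj(A₁₁)A₁₂ − conj(A₂₁)A₂₂`, `γ := |A₂₂|² − |A₁₂|²`) maps the Möbius space
into itself and is a coherent map, with adjoint `A^σ`. -/
theorem mobius_matrix_coherent
    (A : Matrix (Fin 2) (Fin 2) ℂ)
    (hα : 0 < ‖A 0 0‖ ^ 2 - ‖A 1 0‖ ^ 2)
    (hβ : ‖conj (A 0 0) * A 0 1 - conj (A 1 0) * A 1 1‖ ≤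
      ‖A 0 0‖ ^ 2 - ‖A 1 0‖ ^ 2)
    (hγ : ‖A 1 1‖ ^ 2 - ‖A 0 1‖ ^ 2 ≤
      (‖A 0 0‖ ^ 2 - ‖A 1 0‖ ^ 2) -
        2 * ‖conj (A 0 0) * A 0 1 - conj (A 1 0) * A 1 1‖) :
    (∀ z : ℂ × ℂ, ‖z.2‖ < ‖z.1‖ →
      ‖(mobiusAct A z).2‖ < ‖(mobiusAct A z).1‖) ∧
    (∀ z z' : ℂ × ℂ, ‖z.2‖ < ‖z.1‖ → ‖z'.2‖ < ‖z'.1‖ →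
      mobiusK (mobiusAct A z) z' = mobiusK z (mobiusAct (mobiusAdj A) z')) :=
  ⟨fun _ hz => norm_snd_lt_norm_fst_mobiusAct A hα hβ hγ hz,
    fun z z' _ _ => mobiusK_mobiusAct A z z'⟩
end

section
/- For every coherent map A on a coherent space Z with quantum space Q(Z), there is a unique linear map Γ(A) : Q(Z) → Q(Z) with Γ(A)|z⟩ = |Az⟩ for all z ∈ Z, and for any adjoint A* of A one has ⟨z|Γ(A) = ⟨A*z| for all z, i.e., ⟨z|Γ(A)|z'⟩ = K(z, Az') = K(A*z, z'). -/
/-!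
A linear map with `Γ(A)|z⟩ = |Az⟩` has to send `∑ cᵢ|zᵢ⟩` to `∑ cᵢ|Azᵢ⟩`, and this is well defined:
pairing with `⟨w|` turns `∑ cᵢ|Azᵢ⟩` into `⟨A*w|` paired with `∑ cᵢ|zᵢ⟩`, and since the coherent
states span, a vector orthogonal to all of them vanishes. Uniqueness also follows from spanning.
-/

open Submodule Finsupp

theorem Finsupp.exists_linearMap_apply_eq_of_ker_le {ι R M N : Type*} [Ring R]
    [AddCommGroup M] [Module R M] [AddCommGroup N] [Module R N] {k : ι → M} (g : ι → N)
    (hk : span R (Set.range k) = ⊤)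
    (hker : LinearMap.ker (linearCombination R k) ≤ LinearMap.ker (linearCombination R g)) :
    ∃ T : M →ₗ[R] N, ∀ i, T (k i) = g i := by
  have hsurj : Function.Surjective (linearCombination R k) := by
    rw [← LinearMap.range_eq_top, range_linearCombination, hk]
  let e := (linearCombination R k).quotKerEquivOfSurjective hsurj
  refine ⟨(LinearMap.ker _).liftQ (linearCombination R g) hker ∘ₗ e.symm.toLinearMap, fun i => ?_⟩
  have he : e.symm (k i) = Submodule.Quotient.mk (single i 1) := by
    rw [LinearEquiv.symm_apply_eq, LinearMap.quotKerEquivOfSurjective_apply_mk,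
      linearCombination_single, one_smul]
  simp [he]

section InnerProductSpace

variable {ι 𝕜 E : Type*} [RCLike 𝕜] [NormedAddCommGroup E] [InnerProductSpace 𝕜 E]

theorem eq_zero_of_forall_inner_eq_zero_of_span_eq_top_s10 {k : ι → E}
    (hk : span 𝕜 (Set.range k) = ⊤) {v : E} (h : ∀ i, inner 𝕜 (k i) v = 0) : v = 0 := by
  have hv : (innerₛₗ 𝕜).flip v = 0 := LinearMap.ext_on_range hk (by simpa using h)
  exact inner_self_eq_zero.mp (LinearMap.congr_fun hv v)

theorem inner_linearCombination_eq_inner_linearCombination {k g : ι → E} {u u' : E}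
    (h : ∀ i, inner 𝕜 u (g i) = inner 𝕜 u' (k i)) (c : ι →₀ 𝕜) :
    inner 𝕜 u (linearCombination 𝕜 g c) = inner 𝕜 u' (linearCombination 𝕜 k c) := by
  have hc : innerₛₗ 𝕜 u ∘ₗ linearCombination 𝕜 g = innerₛₗ 𝕜 u' ∘ₗ linearCombination 𝕜 k :=
    lhom_ext fun i a => by simp [inner_smul_right, h]
  exact LinearMap.congr_fun hc c

theorem ker_linearCombination_le_ker_linearCombination_comp_of_adjoint {k : ι → E}
    (hk : span 𝕜 (Set.range k) = ⊤) {A Astar : ι → ι}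
    (hadj : ∀ i j, inner 𝕜 (k i) (k (A j)) = inner 𝕜 (k (Astar i)) (k j)) :
    LinearMap.ker (linearCombination 𝕜 k) ≤ LinearMap.ker (linearCombination 𝕜 (k ∘ A)) := by
  intro c hc
  refine eq_zero_of_forall_inner_eq_zero_of_span_eq_top_s10 hk fun i => ?_
  rw [inner_linearCombination_eq_inner_linearCombination (g := k ∘ A) (hadj i) c,
    LinearMap.mem_ker.mp hc, inner_zero_right]

end InnerProductSpace

/-- For every coherent map `A` on `Z` there is a unique linear map `Γ(A)` on the quantum space
with `Γ(A)|z⟩ = |Az⟩`; moreover `⟨z|Γ(A)|z'⟩ = K(z, Az') = K(A*z, z')` for any adjoint `A*`. -/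
theorem quantization_of_coherent_map
    {Z : Type*} {Q : Type*} [NormedAddCommGroup Q] [InnerProductSpace ℂ Q]
    (K : Z → Z → ℂ) (k : Z → Q)
    (hK : ∀ z z', (inner ℂ (k z) (k z') : ℂ) = K z z')
    (hspan : Submodule.span ℂ (Set.range k) = ⊤)
    (A Astar : Z → Z) (hadj : ∀ z z', K z (A z') = K (Astar z) z') :
    (∃! T : Q →ₗ[ℂ] Q, ∀ z, T (k z) = k (A z)) ∧
    (∀ T : Q →ₗ[ℂ] Q, (∀ z, T (k z) = k (A z)) →
      ∀ z z', (inner ℂ (k z) (T (k z')) : ℂ) = K z (A z') ∧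
        (inner ℂ (k z) (T (k z')) : ℂ) = K (Astar z) z') := by
  have hker : LinearMap.ker (linearCombination ℂ k) ≤ LinearMap.ker (linearCombination ℂ (k ∘ A)) :=
    ker_linearCombination_le_ker_linearCombination_comp_of_adjoint hspan fun z z' => by
      rw [hK, hK, hadj]
  obtain ⟨T, hT⟩ := Finsupp.exists_linearMap_apply_eq_of_ker_le (k ∘ A) hspan hker
  refine ⟨⟨T, hT, fun T' hT' => LinearMap.ext_on_range hspan fun z => (hT' z).trans (hT z).symm⟩,
    fun T' hT' z z' => ?_⟩
  rw [hT', hK]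
  exact ⟨rfl, hadj z z'⟩
end

section
/- If Z is a coherent space then Z_× := (sep Z) × Z, equipped with K_×((α,z),(α',z')) := K(α'z, αz'), is a coherent space; i.e., K_× is of positive type. -/
open scoped ComplexConjugate
open scoped ComplexOrder

/-- If `Z` is a coherent space (Hermitian kernel `K` of positive type), then
`Z_× := (sep Z) × Z` with `K_×((α,z),(α',z')) := K(α'z, αz')` is a coherent space,
i.e. `K_×` is of positive type. -/
theorem sep_product_coherent_space
    {Z : Type*} (K : Z → Z → ℂ)
    (hherm : ∀ z z', K z z' = conj (K z' z))
    (hpos : ∀ (n : ℕ) (c : Fin n → ℂ) (zs : Fin n → Z),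
      0 ≤ ∑ j, ∑ l, conj (c j) * c l * K (zs j) (zs l)) :
    ∀ (n : ℕ) (c : Fin n → ℂ)
      (p : Fin n → ({α : Z → Z // ∃ χ : ℂ, ∀ z z', K z (α z') = χ * K z z'} × Z)),
      0 ≤ ∑ j, ∑ l, conj (c j) * c l * K ((p l).1.1 (p j).2) ((p j).1.1 (p l).2) := by
  intro n c p
  classical
  set χ : Fin n → ℂ := fun j => Classical.choose (p j).1.2 with hχ
  have hspec : ∀ j z z', K z ((p j).1.1 z') = χ j * K z z' := fun j =>
    Classical.choose_spec (p j).1.2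
  have key : ∀ j l, K ((p l).1.1 (p j).2) ((p j).1.1 (p l).2)
      = χ j * conj (χ l) * K ((p j).2) ((p l).2) := by
    intro j l
    rw [hspec j, hherm ((p l).1.1 (p j).2), hspec l, map_mul, ← hherm]
    ring
  have h := hpos n (fun j => c j * conj (χ j)) (fun j => (p j).2)
  refine le_of_le_of_eq h ?_
  refine Finset.sum_congr rfl fun j _ => Finset.sum_congr rfl fun l _ => ?_
  rw [key j l]
  simp only [map_mul, Complex.conj_conj]
  ring
end

section
/- The Möbius space Z = {z ∈ ℂ² : |z₁| > |z₂|} with coherent product K(z,z') = (conj(z₁)z₁' − conj(z₂)z₂')^{-1} is slender: any finite set of linearly dependent nonzero coherent states contains two parallel coherent states. Equivalently, if ∑_k c_k/(conj(z_{k1}) w₁ − conj(z_{k2}) w₂) = 0 for all w ∈ Z with not all c_k zero, then two of the points z_k are complex scalar multiples of each other. -/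
open scoped ComplexConjugate
open Polynomial Finset

/-!
Dehomogenise at `w = (v, 1)`: for `|v| > 1` the coherent product `K(zₖ, w)` equals
`(conj zₖ₁)⁻¹ / (v - rₖ)` with `rₖ = conj (zₖ₂ / zₖ₁)`, and `rₖ = rₗ` exactly when `zₖ` and `zₗ` are
parallel. Simple fractions `1 / (v - rₖ)` with distinct poles are linearly independent on any infinite
set avoiding the poles: clearing denominators gives a polynomial with infinitely many roots, hence
zero, and evaluating it at the pole `rₖ` isolates the `k`-th coefficient.
-/

theorem eq_zero_of_forall_sum_div_sub_eq_zero {K ι : Type*} [Field K] [Fintype ι] [DecidableEq ι]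
    {r : ι → K} (hr : Function.Injective r) {S : Set K} (hS : S.Infinite)
    (hSr : ∀ v ∈ S, ∀ i, v ≠ r i) {d : ι → K} (hd : ∀ v ∈ S, ∑ i, d i / (v - r i) = 0) (i : ι) :
    d i = 0 := by
  set Q : K[X] := ∑ k, C (d k) * Lagrange.nodal (univ.erase k) r
  have hQ (v : K) : Q.eval v = ∑ k, d k * ∏ j ∈ univ.erase k, (v - r j) := by
    simp [Q, eval_finsetSum, Lagrange.eval_nodal]
  have hQS : ∀ v ∈ S, Q.IsRoot v := by
    intro v hv
    have hclear : Q.eval v = (∑ k, d k / (v - r k)) * ∏ j, (v - r j) := by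
      rw [hQ, sum_mul]
      refine sum_congr rfl fun k _ => ?_
      rw [← mul_prod_erase _ _ (mem_univ k)]
      field_simp [sub_ne_zero.2 (hSr v hv k)]
    rw [IsRoot, hclear, hd v hv, zero_mul]
  have hQr := hQ (r i)
  rw [eq_zero_of_infinite_isRoot Q (hS.mono hQS), eval_zero, sum_eq_single i] at hQr
  · refine (mul_eq_zero.1 hQr.symm).resolve_right (prod_ne_zero_iff.2 fun j hj => ?_)
    exact sub_ne_zero.2 (hr.ne (mem_erase.1 hj).1.symm)
  · intro k _ hki
    exact mul_eq_zero_of_right _ (prod_eq_zero (mem_erase.2 ⟨Ne.symm hki, mem_univ i⟩) (sub_self _))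
  · exact fun h => absurd (mem_univ i) h

theorem Complex.infinite_setOf_one_lt_norm : {v : ℂ | 1 < ‖v‖}.Infinite := by
  refine Set.infinite_of_injective_forall_mem (f := fun n : ℕ => ((n + 2 : ℕ) : ℂ)) ?_ fun n => ?_
  · exact fun m n h => by simpa using h
  · simp only [Set.mem_ofPred_eq, Complex.norm_natCast]
    norm_cast
    omega

theorem Prod.eq_smul_of_snd_div_fst_eq {K : Type*} [Field K] {z z' : K × K} (hz : z.1 ≠ 0)
    (hz' : z'.1 ≠ 0) (h : z'.2 / z'.1 = z.2 / z.1) : z' = (z'.1 / z.1) • z := by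
  rw [div_eq_div_iff hz' hz] at h
  ext
  · simp [hz]
  · simp only [Prod.smul_snd, smul_eq_mul]
    field_simp
    linear_combination h

/-- The Möbius space `Z = {z ∈ ℂ² : |z₁| > |z₂|}` with coherent product
`K(z,z') = (conj(z₁)z₁' − conj(z₂)z₂')⁻¹` is slender: if a finite family of points of `Z`
satisfies `∑ c_k K(z_k, w) = 0` for all `w ∈ Z` with not all `c_k` zero, then two of the
points are complex scalar multiples of each other (i.e. two coherent states are parallel). -/
theorem mobius_space_slender :
    ∀ (n : ℕ) (c : Fin n → ℂ) (zs : Fin n → ℂ × ℂ),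
      (∀ i, ‖(zs i).2‖ < ‖(zs i).1‖) →
      (∀ w : ℂ × ℂ, ‖w.2‖ < ‖w.1‖ →
        ∑ i, c i * (conj (zs i).1 * w.1 - conj (zs i).2 * w.2)⁻¹ = 0) →
      (¬ ∀ i, c i = 0) →
      ∃ i j : Fin n, i ≠ j ∧ ∃ t : ℂ, zs j = t • zs i := by
  intro n c zs hz hsum hc
  by_contra hpar
  push Not at hpar
  have hz₁ (i : Fin n) : (zs i).1 ≠ 0 := norm_pos_iff.1 ((norm_nonneg _).trans_lt (hz i))
  set r : Fin n → ℂ := fun i => conj ((zs i).2 / (zs i).1)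
  have hr : Function.Injective r := fun i j hij => by_contra fun hij' =>
    hpar i j hij' _ (Prod.eq_smul_of_snd_div_fst_eq (hz₁ i) (hz₁ j) (star_injective hij).symm)
  have hr_lt (i : Fin n) : ‖r i‖ < 1 := by
    simpa [r, div_lt_one (norm_pos_iff.2 (hz₁ i))] using hz i
  have hfractions : ∀ v ∈ {v : ℂ | 1 < ‖v‖},
      ∑ i, c i / conj (zs i).1 / (v - r i) = 0 := by
    intro v hv
    rw [← hsum (v, 1) (by simpa using hv)]
    refine sum_congr rfl fun k _ => ?_
    simp only [r, map_div₀]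
    field_simp [(map_ne_zero (starRingEnd ℂ)).2 (hz₁ k)]
  refine hc fun i => ?_
  have hd := eq_zero_of_forall_sum_div_sub_eq_zero hr Complex.infinite_setOf_one_lt_norm
    (fun v hv i h => (hr_lt i).not_gt (h ▸ hv)) hfractions i
  simpa [hz₁ i] using hd
end

section
/- The Klauder space Kl[V] over a complex inner product space V, with underlying set ℂ × V and coherent product K([z₀,𝐳],[z₀',𝐳']) = exp(conj(z₀) + z₀' + ⟨𝐳,𝐳'⟩), is slender: if ∑_k c_k exp(conj(z_{k,0}) + w₀ + ⟨𝐳_k, 𝐰⟩) = 0 for all [w₀,𝐰] ∈ ℂ × V, with the 𝐳_k pairwise distinct, then all c_k = 0. -/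
/-!
Choose `v ∈ V` such that the real parts `re ⟨𝐳_k, v⟩` are pairwise distinct: two given points
are identified only on a proper real hyperplane, and finitely many hyperplanes cannot cover `V`.
Then the numbers `x_k = exp ⟨𝐳_k, v⟩` have distinct moduli, and testing the relation against
`w = (0, m • v)`, `m ∈ ℕ`, gives `∑ c_k exp(conj z_{k,0}) x_k ^ m = 0`; the Vandermonde
determinant of the `x_k` is nonzero, so every `c_k exp(conj z_{k,0})`, hence every `c_k`, vanishes.
-/

open scoped ComplexConjugate

open Function

theorem LinearMap.exists_forall_apply_ne_zero {k E ι : Type*} [DivisionRing k] [Infinite k]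
    [AddCommGroup E] [Module k E] [Finite ι] (f : ι → E →ₗ[k] k) (hf : ∀ i, f i ≠ 0) :
    ∃ v, ∀ i, f i v ≠ 0 := by
  by_contra! hcover
  have hunion : ⋃ i, ((LinearMap.ker (f i) : Subspace k E) : Set E) = Set.univ :=
    Set.eq_univ_of_forall fun v => Set.mem_iUnion.mpr (hcover v)
  obtain ⟨i, hi⟩ := Subspace.exists_eq_top_of_iUnion_eq_univ hunion
  exact hf i (LinearMap.ker_eq_top.mp hi)

theorem exists_injective_re_inner {V ι : Type*} [NormedAddCommGroup V] [InnerProductSpace ℂ V]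
    [Finite ι] {z : ι → V} (hz : Injective z) :
    ∃ v : V, Injective fun i => (inner ℂ (z i) v).re := by
  let f : {p : ι × ι // p.1 ≠ p.2} → V →ₗ[ℝ] ℝ := fun p =>
    Complex.reLm ∘ₗ (innerₛₗ ℂ (z p.1.1 - z p.1.2)).restrictScalars ℝ
  have hf : ∀ p, f p ≠ 0 := fun p hp => by
    have hself := LinearMap.congr_fun hp (z p.1.1 - z p.1.2)
    simp only [f, LinearMap.coe_comp, LinearMap.coe_restrictScalars, comp_apply,
      innerₛₗ_apply_apply, Complex.reLm_coe, LinearMap.zero_apply] at hself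
    rw [← RCLike.re_eq_complex_re, inner_self_eq_norm_sq, sq_eq_zero_iff, norm_eq_zero,
      sub_eq_zero] at hself
    exact p.2 (hz hself)
  obtain ⟨v, hv⟩ := LinearMap.exists_forall_apply_ne_zero f hf
  refine ⟨v, fun i j hij => by_contra fun hne => hv ⟨(i, j), hne⟩ ?_⟩
  simp only [f, LinearMap.coe_comp, LinearMap.coe_restrictScalars, comp_apply,
    innerₛₗ_apply_apply, Complex.reLm_coe, inner_sub_left, Complex.sub_re]
  exact sub_eq_zero.mpr hij

/-- The Klauder space `Kl[V] = ℂ × V` with coherent product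
`K([z₀,𝐳],[w₀,𝐰]) = exp(conj(z₀) + w₀ + ⟨𝐳,𝐰⟩)` is slender: if
`∑ c_k exp(conj(z_{k,0}) + w₀ + ⟨𝐳_k,𝐰⟩) = 0` for all `[w₀,𝐰] ∈ ℂ × V` with the `𝐳_k`
pairwise distinct, then all `c_k = 0`. -/
theorem klauder_space_slender
    {V : Type*} [NormedAddCommGroup V] [InnerProductSpace ℂ V]
    (n : ℕ) (c : Fin n → ℂ) (zs : Fin n → ℂ × V)
    (hdist : ∀ i j, i ≠ j → (zs i).2 ≠ (zs j).2)
    (h : ∀ w : ℂ × V,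
      ∑ i, c i * Complex.exp (conj (zs i).1 + w.1 + (inner ℂ (zs i).2 w.2 : ℂ)) = 0) :
    ∀ i, c i = 0 := by
  obtain ⟨v, hv⟩ := exists_injective_re_inner fun i j hij => not_imp_not.mp (hdist i j) hij
  let x : Fin n → ℂ := fun i => Complex.exp (inner ℂ (zs i).2 v)
  have hx : Injective x := by
    refine Injective.of_comp (f := norm) ?_
    simpa only [comp_def, x, Complex.norm_exp] using Real.exp_injective.comp hv
  have hd : (fun i => c i * Complex.exp (conj (zs i).1)) = 0 := by
    refine Matrix.eq_zero_of_forall_pow_sum_mul_pow_eq_zero hx fun k => ?_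
    rw [← h (0, (k : ℂ) • v)]
    refine Finset.sum_congr rfl fun i _ => ?_
    rw [inner_smul_right, add_zero, Complex.exp_add, Complex.exp_nat_mul, mul_assoc]
  intro i
  simpa [Complex.exp_ne_zero] using congrFun hd i
end
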